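/- arXiv:math/0101006 — 4 statements merged into one kernel-verified Lean document; each statement's English description precedes it below -/
import Mathlib

section
/- In the Hecke algebra of type A_1 with parameter q > 1, setting θ = q^{-1/2} T_{t_1}, the trace satisfies τ(θ^n) = 0 unless n = −2k with k ∈ Z_{≥0}, τ(θ^0) = 1, and for k > 0: τ(θ^{-2k}) = (q−1)(q^k − q^{-k})/(q+1). -/
/-- The extended affine Weyl group of type `A₁` is `W = W₀ ⋉ ℤ` with `W₀ = {e, s}`;
we encode the element `t_n s^b` as the pair `(n, b) : ℤ × Bool`.  Multiplication:
`t_m s^b · t_n s^c = t_{m + (−1)^b n} s^{b xor c}`. -/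
def A1mul (p p' : ℤ × Bool) : ℤ × Bool :=
  (p.1 + (if p.2 then -p'.1 else p'.1), xor p.2 p'.2)

/-- The length function on `W`: `l(t_n) = |n|` and `l(t_n s) = |n − 1|`
(specializing formula (1.1) to the `A₁` root datum `X = Y = ℤ`, `R₀ = {±2}`,
`R₀^∨ = {±1}`).  In particular `ω = t_1 s` has length `0`. -/
def A1len (p : ℤ × Bool) : ℕ :=
  if p.2 then (p.1 - 1).natAbs else p.1.natAbs

/-!
With `s = (0, true)`, `ω = (1, true)` and `e = (0, false)`, put `X = (T_s - (q - 1)) T_ω`. The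
quadratic relation gives `T_{t_1} X = q`, so `θ⁻¹ = q^{-1/2} X`, while `θ^m = q^{-m/2} T_{t_m}` has
trace `0` for `m > 0`. Left multiplication by `X` sends `T_u` to `q T_{t_{-1} u}` or to
`T_{t_{-1} u} - (q - 1) T_{ω u}` according to whether `t_{-1} u` is shorter than `u`; this is a
linear recursion for the coefficients of `X^n` in the basis `T_w`, solved in closed form by
`powCoeff`. The coefficient of `T_e` is `0` for odd `n` and `(q - 1)(q^n - 1)/(q + 1)` for even
`n > 0`.
-/

lemma A1len_omega_mul (a : ℤ) (b : Bool) : A1len (1 - a, !b) = A1len (a, b) := by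
  cases b
  · simp [A1len]
  · simp [A1len]; omega

section StepMap

variable {R : Type*} [CommRing R]

/-- The coefficients of `scaledTInv q T * T u` in the basis `T` (see `scaledTInv_mul_T`). -/
noncomputable def stepVec (q : R) (u : ℤ × Bool) : ℤ × Bool →₀ R :=
  if A1len (u.1 - 1, u.2) < A1len u then Finsupp.single (u.1 - 1, u.2) q
  else Finsupp.single (u.1 - 1, u.2) 1 - Finsupp.single (1 - u.1, !u.2) (q - 1)

noncomputable def stepMap (q : R) : (ℤ × Bool →₀ R) →ₗ[R] ℤ × Bool →₀ R :=
  Finsupp.linearCombination R (stepVec q)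

lemma stepMap_apply (q : R) (f : ℤ × Bool →₀ R) (a : ℤ) (b : Bool) :
    stepMap q f (a, b) = (if A1len (a, b) < A1len (a + 1, b) then q else 1) * f (a + 1, b)
      + (if A1len (-a, !b) < A1len (1 - a, !b) then 0 else 1 - q) * f (1 - a, !b) := by
  induction f using Finsupp.induction_linear with
  | zero => simp
  | add f g hf hg => simp only [map_add, Finsupp.add_apply, hf, hg]; ring
  | single u c =>
    obtain ⟨a', b'⟩ := u
    have e₁ : (a' - 1, b') = (a, b) ↔ (a', b') = (a + 1, b) := by
      simp only [Prod.mk.injEq, sub_eq_iff_eq_add]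
    have e₂ : (1 - a', !b') = (a, b) ↔ (a', b') = (1 - a, !b) := by
      simp only [Prod.mk.injEq, Bool.not_eq_eq_eq_not]
      exact and_congr_left' ⟨fun h => by omega, fun h => by omega⟩
    simp only [stepMap, Finsupp.linearCombination_single, Finsupp.smul_apply, smul_eq_mul,
      stepVec, apply_ite (fun g : ℤ × Bool →₀ R => g (a, b)), Finsupp.sub_apply,
      Finsupp.single_apply, e₁, e₂]
    by_cases h₁ : (a', b') = (a + 1, b)
    · obtain ⟨rfl, rfl⟩ := Prod.mk.inj h₁
      simp [mul_comm]
    by_cases h₂ : (a', b') = (1 - a, !b)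
    · obtain ⟨rfl, rfl⟩ := Prod.mk.inj h₂
      simp [mul_comm]
    simp [h₁, h₂]

end StepMap

section HeckeA1

variable {R H : Type*} [CommRing R] [Ring H] [Algebra R H] {q : R} {T : ℤ × Bool → H}

lemma T_s_mul_self (hquad : (T (0, true) + 1) * (T (0, true) - q • 1) = 0) :
    T (0, true) * T (0, true) = (q - 1) • T (0, true) + q • 1 := by
  rw [← sub_eq_zero, ← hquad]
  simp only [add_mul, mul_sub, one_mul, mul_smul_comm, mul_one]
  module

/-- `T_s - (q - 1)` is `q T_s⁻¹` by the quadratic relation and `T_{t_1} = T_ω T_s`, so this is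
`q T_{t_1}⁻¹` (see `T_t1_mul_scaledTInv`). -/
def scaledTInv (q : R) (T : ℤ × Bool → H) : H := (T (0, true) - (q - 1) • 1) * T (1, true)

variable (hTmul : ∀ p p' : ℤ × Bool, A1len (A1mul p p') = A1len p + A1len p' →
    T (A1mul p p') = T p * T p')
include hTmul

lemma T_omega_mul (a : ℤ) (b : Bool) : T (1, true) * T (a, b) = T (1 - a, !b) := by
  have h := hTmul (1, true) (a, b) (by cases b <;> simp [A1mul, A1len]; omega)
  simpa [A1mul, sub_eq_add_neg] using h.symm

lemma T_s_mul_of_len_lt {a : ℤ} {b : Bool} (h : A1len (a, b) < A1len (-a, !b)) :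
    T (0, true) * T (a, b) = T (-a, !b) := by
  have h := hTmul (0, true) (a, b) (by cases b <;> simp [A1mul, A1len] at h ⊢ <;> omega)
  simpa [A1mul] using h.symm

lemma T_t1_pow (hT1 : T (0, false) = 1) (m : ℕ) : T (1, false) ^ m = T (m, false) := by
  induction m with
  | zero => simp [hT1]
  | succ m ih =>
    have h := hTmul (m, false) (1, false) (by simp [A1mul, A1len]; omega)
    rw [pow_succ, ih]
    simpa [A1mul] using h.symm

variable (hquad : (T (0, true) + 1) * (T (0, true) - q • 1) = 0)
include hquad

lemma T_s_mul_of_len_gt {a : ℤ} {b : Bool} (h : A1len (-a, !b) < A1len (a, b)) :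
    T (0, true) * T (a, b) = (q - 1) • T (a, b) + q • T (-a, !b) := by
  have hfac : T (a, b) = T (0, true) * T (-a, !b) := by
    simpa using (T_s_mul_of_len_lt hTmul (a := -a) (b := !b) (by simpa using h)).symm
  rw [hfac, ← mul_assoc, T_s_mul_self hquad, add_mul, smul_mul_assoc, smul_mul_assoc, one_mul]

lemma T_t1_mul_scaledTInv (hT1 : T (0, false) = 1) : T (1, false) * scaledTInv q T = q • 1 := by
  have hω : T (1, true) * T (1, true) = 1 := by simpa [hT1] using T_omega_mul hTmul 1 true
  have ht1 : T (1, false) = T (1, true) * T (0, true) := by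
    simpa using (T_omega_mul hTmul 0 true).symm
  calc T (1, false) * scaledTInv q T
      = T (1, true) * (T (0, true) * T (0, true) - (q - 1) • T (0, true)) * T (1, true) := by
        simp only [ht1, scaledTInv, mul_sub, sub_mul, mul_smul_comm, smul_mul_assoc, one_mul,
          mul_assoc]
    _ = q • 1 := by
        rw [T_s_mul_self hquad, add_sub_cancel_left, mul_smul_comm, smul_mul_assoc, mul_one, hω]

lemma scaledTInv_mul_T (a : ℤ) (b : Bool) :
    scaledTInv q T * T (a, b) = Finsupp.linearCombination R T (stepVec q (a, b)) := by
  have hω : scaledTInv q T * T (a, b) = T (0, true) * T (1 - a, !b) - (q - 1) • T (1 - a, !b) := by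
    rw [scaledTInv, mul_assoc, T_omega_mul hTmul, sub_mul, smul_mul_assoc, one_mul]
  rw [hω, stepVec]
  by_cases h : A1len (a - 1, b) < A1len (a, b)
  · rw [if_pos h, T_s_mul_of_len_gt hTmul hquad (by simpa [A1len_omega_mul] using h)]
    simp
  · rw [if_neg h, T_s_mul_of_len_lt hTmul (by cases b <;> simp [A1len] at h ⊢ <;> omega)]
    simp [sub_smul]

lemma scaledTInv_mul_linearCombination (f : ℤ × Bool →₀ R) :
    scaledTInv q T * Finsupp.linearCombination R T f
      = Finsupp.linearCombination R T (stepMap q f) := by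
  induction f using Finsupp.induction_linear with
  | zero => simp
  | add f g hf hg => rw [map_add, mul_add, hf, hg, map_add, map_add]
  | single u c =>
    rw [Finsupp.linearCombination_single, mul_smul_comm, stepMap,
      Finsupp.linearCombination_single, map_smul, ← scaledTInv_mul_T hTmul hquad]

lemma scaledTInv_pow (hT1 : T (0, false) = 1) (n : ℕ) :
    scaledTInv q T ^ n
      = Finsupp.linearCombination R T ((stepMap q)^[n] (Finsupp.single (0, false) 1)) := by
  induction n with
  | zero => simp [hT1]
  | succ n ih =>
    rw [pow_succ', ih, scaledTInv_mul_linearCombination hTmul hquad,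
      Function.iterate_succ_apply']

lemma val_inv_eq_smul_scaledTInv (hT1 : T (0, false) = 1) {θ : Hˣ} {c : R}
    (hθ : (θ : H) = c • T (1, false)) (hc : c * c * q = 1) :
    ((θ⁻¹ : Hˣ) : H) = c • scaledTInv q T :=
  Units.inv_eq_of_mul_eq_one_right <| by
    rw [hθ, smul_mul_smul_comm, T_t1_mul_scaledTInv hTmul hquad hT1, smul_smul, hc, one_smul]

end HeckeA1

lemma trace_linearCombination {R H : Type*} [CommRing R] [AddCommGroup H] [Module R H]
    {T : ℤ × Bool → H} (τ : H →ₗ[R] R)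
    (hτ : ∀ p : ℤ × Bool, τ (T p) = if p = (0, false) then 1 else 0) (f : ℤ × Bool →₀ R) :
    τ (Finsupp.linearCombination R T f) = f (0, false) := by
  induction f using Finsupp.induction_linear with
  | zero => simp
  | add f g hf hg => simp [hf, hg]
  | single u c => simp [hτ, Finsupp.single_apply]

section PowCoeff

variable {𝕜 : Type*} [Field 𝕜]

/-- The coefficient of `T w` in `scaledTInv q T ^ n`, obtained by solving the recursion
`powCoeff_succ`. -/
noncomputable def powCoeff (q : 𝕜) (n : ℕ) : ℤ × Bool → 𝕜
  | (a, false) => (if a = -n then 1 else 0) +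
      if a.natAbs ≤ n ∧ 2 ∣ a + n then (q - 1) * (q ^ (n - a.natAbs) - 1) / (q + 1) else 0
  | (a, true) =>
      if (a - 1).natAbs ≤ n ∧ 2 ∣ a + n then -((q - 1) * (q ^ (n - (a - 1).natAbs) + 1)) / (q + 1)
      else 0

variable {q : 𝕜}

lemma powCoeff_succ_false (n : ℕ) (a : ℤ) :
    powCoeff q (n + 1) (a, false) = (if 0 ≤ a then q else 1) * powCoeff q n (a + 1, false)
      + (if a < 0 then 0 else 1 - q) * powCoeff q n (1 - a, true) := by
  simp only [powCoeff]
  obtain h | h | h | h | h : (2 ∣ a + n ∨ a < -n - 1 ∨ n + 1 < a) ∨ a = -n - 1 ∨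
      (¬ 2 ∣ a + n ∧ -n - 1 < a ∧ a < 0) ∨ (¬ 2 ∣ a + n ∧ 0 ≤ a ∧ a < n) ∨ a = n + 1 := by omega
  · simp (disch := omega) only [if_neg]
    ring
  · simp (disch := omega) only [if_pos, if_neg]
    rw [show n + 1 - a.natAbs = 0 by omega, show n - (a + 1).natAbs = 0 by omega]
    ring
  · simp (disch := omega) only [if_pos, if_neg]
    rw [show n + 1 - a.natAbs = n - (a + 1).natAbs by omega]
    ring
  · simp (disch := omega) only [if_pos, if_neg]
    rw [show n + 1 - a.natAbs = n - (a + 1).natAbs + 2 by omega,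
      show n - (1 - a - 1).natAbs = n - (a + 1).natAbs + 1 by omega]
    ring
  · simp (disch := omega) only [if_pos, if_neg]
    rw [show n + 1 - a.natAbs = 0 by omega]
    ring

lemma powCoeff_succ_true (hq : q + 1 ≠ 0) (n : ℕ) (a : ℤ) :
    powCoeff q (n + 1) (a, true) = (if 1 ≤ a then q else 1) * powCoeff q n (a + 1, true)
      + (if a ≤ 0 then 0 else 1 - q) * powCoeff q n (1 - a, false) := by
  simp only [powCoeff]
  obtain h | h | h | h : (2 ∣ a + n ∨ a ≤ -n ∨ n + 1 < a) ∨
      (¬ 2 ∣ a + n ∧ -n < a ∧ a ≤ 0) ∨ (¬ 2 ∣ a + n ∧ 1 ≤ a ∧ a < n) ∨ a = n + 1 := by omega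
  · simp (disch := omega) only [if_neg]
    ring
  · simp (disch := omega) only [if_pos, if_neg]
    rw [show n + 1 - (a - 1).natAbs = n - (a + 1 - 1).natAbs by omega]
    ring
  · simp (disch := omega) only [if_pos, if_neg]
    rw [show n + 1 - (a - 1).natAbs = n - (a + 1 - 1).natAbs + 2 by omega,
      show n - (1 - a).natAbs = n - (a + 1 - 1).natAbs + 1 by omega]
    ring
  · simp (disch := omega) only [if_pos, if_neg]
    rw [show n + 1 - (a - 1).natAbs = 1 by omega, show n - (1 - a).natAbs = 0 by omega]
    field_simp
    ring

lemma powCoeff_succ (hq : q + 1 ≠ 0) (n : ℕ) (a : ℤ) (b : Bool) :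
    powCoeff q (n + 1) (a, b) = (if A1len (a, b) < A1len (a + 1, b) then q else 1)
        * powCoeff q n (a + 1, b)
      + (if A1len (-a, !b) < A1len (1 - a, !b) then 0 else 1 - q) * powCoeff q n (1 - a, !b) := by
  cases b
  · have hα : A1len (a, false) < A1len (a + 1, false) ↔ 0 ≤ a := by simp [A1len]; omega
    have hβ : A1len (-a, true) < A1len (1 - a, true) ↔ a < 0 := by simp [A1len]; omega
    simp only [powCoeff_succ_false, hα, Bool.not_false, hβ]
  · have hα : A1len (a, true) < A1len (a + 1, true) ↔ 1 ≤ a := by simp [A1len]; omega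
    have hβ : A1len (-a, false) < A1len (1 - a, false) ↔ a ≤ 0 := by simp [A1len]; omega
    simp only [powCoeff_succ_true hq, hα, Bool.not_true, hβ]

lemma powCoeff_zero (w : ℤ × Bool) : powCoeff q 0 w = Finsupp.single (0, false) 1 w := by
  obtain ⟨a, _ | _⟩ := w
  · by_cases ha : a = 0
    · simp [powCoeff, ha]
    · simp only [powCoeff, Finsupp.single_apply]
      simp (disch := omega) only [if_neg]
      simp [Ne.symm ha]
  · simp only [powCoeff, Finsupp.single_apply]
    simp (disch := omega) only [if_neg]
    simp

lemma powCoeff_identity_of_odd (n : ℕ) (hn : ¬ 2 ∣ (n : ℤ)) : powCoeff q n (0, false) = 0 := by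
  simp only [powCoeff]
  simp (disch := omega) only [if_neg]
  simp

lemma powCoeff_identity_of_even (n : ℕ) (hn : 2 ∣ (n : ℤ)) (hn₀ : n ≠ 0) :
    powCoeff q n (0, false) = (q - 1) * (q ^ n - 1) / (q + 1) := by
  simp only [powCoeff]
  simp (disch := omega) only [if_pos, if_neg]
  simp

lemma stepMap_iterate_single (hq : q + 1 ≠ 0) (n : ℕ) (w : ℤ × Bool) :
    (stepMap q)^[n] (Finsupp.single (0, false) 1) w = powCoeff q n w := by
  induction n generalizing w with
  | zero => exact (powCoeff_zero w).symm
  | succ n ih =>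
    obtain ⟨a, b⟩ := w
    rw [Function.iterate_succ_apply', stepMap_apply, ih, ih, powCoeff_succ hq]

end PowCoeff

section Theta

variable {𝕜 H : Type*} [Field 𝕜] [Ring H] [Algebra 𝕜 H] {q : 𝕜} {T : ℤ × Bool → H}
  (hTmul : ∀ p p' : ℤ × Bool, A1len (A1mul p p') = A1len p + A1len p' →
    T (A1mul p p') = T p * T p')
  (hT1 : T (0, false) = 1) (τ : H →ₗ[𝕜] 𝕜)
  (hτ : ∀ p : ℤ × Bool, τ (T p) = if p = (0, false) then 1 else 0)
  {θ : Hˣ} {c : 𝕜} (hθ : (θ : H) = c • T (1, false))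
include hTmul hT1 hτ hθ

lemma trace_zpow_natCast_of_pos (m : ℕ) (hm : 0 < m) : τ ((θ ^ (m : ℤ) : Hˣ) : H) = 0 := by
  rw [zpow_natCast, Units.val_pow_eq_pow_val, hθ, smul_pow, T_t1_pow hTmul hT1, map_smul, hτ,
    if_neg (by simp; omega), smul_zero]

lemma trace_zpow_neg (hquad : (T (0, true) + 1) * (T (0, true) - q • 1) = 0)
    (hq : q + 1 ≠ 0) (hc : c * c * q = 1) (m : ℕ) :
    τ ((θ ^ (-(m : ℤ)) : Hˣ) : H) = c ^ m * powCoeff q m (0, false) := by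
  rw [zpow_neg, zpow_natCast, ← inv_pow, Units.val_pow_eq_pow_val,
    val_inv_eq_smul_scaledTInv hTmul hquad hT1 hθ hc, smul_pow, scaledTInv_pow hTmul hquad hT1,
    map_smul, trace_linearCombination τ hτ, stepMap_iterate_single hq, smul_eq_mul]

end Theta

theorem trace_powers_theta_A1_general
    (q : ℝ) (hq : 1 < q)
    (H : Type*) [Ring H] [Algebra ℂ H]
    (T : ℤ × Bool → H)
    (hT1 : T (0, false) = 1)
    (hTmul : ∀ p p' : ℤ × Bool, A1len (A1mul p p') = A1len p + A1len p' →
        T (A1mul p p') = T p * T p')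
    (hquad_s : (T (0, true) + 1) * (T (0, true) - (q : ℂ) • 1) = 0)
    (τ : H →ₗ[ℂ] ℂ)
    (hτ : ∀ p : ℤ × Bool, τ (T p) = if p = (0, false) then 1 else 0)
    (θ : Hˣ)
    (hθ : (θ : H) = (((Real.sqrt q)⁻¹ : ℝ) : ℂ) • T (1, false)) :
    (∀ n : ℤ, (¬ ∃ k : ℤ, 0 ≤ k ∧ n = -(2 * k)) → τ ((θ ^ n : Hˣ) : H) = 0)
    ∧ τ ((θ ^ (0 : ℤ) : Hˣ) : H) = 1
    ∧ (∀ k : ℤ, 0 < k →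
        τ ((θ ^ (-(2 * k)) : Hˣ) : H)
          = (((q - 1) * (q ^ k - q ^ (-k)) / (q + 1) : ℝ) : ℂ)) := by
  have hq₀ : (q : ℂ) ≠ 0 := by exact_mod_cast (by linarith : q ≠ 0)
  have hq₁ : (q : ℂ) + 1 ≠ 0 := by exact_mod_cast (by linarith : q + 1 ≠ 0)
  set c : ℂ := (((Real.sqrt q)⁻¹ : ℝ) : ℂ)
  have hc : c * c * q = 1 := by
    rw [← Complex.ofReal_mul, ← mul_inv, Real.mul_self_sqrt (by linarith), Complex.ofReal_inv,
      inv_mul_cancel₀ hq₀]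
  have hneg := trace_zpow_neg hTmul hT1 τ hτ hθ hquad_s hq₁ hc
  refine ⟨fun n hn => ?_, by rw [zpow_zero, Units.val_one, ← hT1, hτ, if_pos rfl], fun k hk => ?_⟩
  · obtain ⟨m, rfl | rfl⟩ := Int.eq_nat_or_neg n
    · exact trace_zpow_natCast_of_pos hTmul hT1 τ hτ hθ m
        (by by_contra h; exact hn ⟨0, le_rfl, by omega⟩)
    · rw [hneg, powCoeff_identity_of_odd m (fun ⟨k, hk⟩ => hn ⟨k, by omega, by omega⟩), mul_zero]
  · lift k to ℕ using hk.le
    rw [show -(2 * (k : ℤ)) = -((2 * k : ℕ) : ℤ) by push_cast; ring, hneg,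
      powCoeff_identity_of_even _ (by push_cast; exact dvd_mul_right 2 _) (by omega),
      pow_mul, sq, eq_inv_of_mul_eq_one_left hc, inv_pow]
    push_cast [zpow_neg, zpow_natCast]
    field_simp
    ring

theorem trace_powers_theta_A1
    (q : ℝ) (hq : 1 < q)
    (H : Type*) [Ring H] [Algebra ℂ H]
    (T : ℤ × Bool → H)
    (hTindep : LinearIndependent ℂ T)
    (hT1 : T (0, false) = 1)
    (hTmul : ∀ p p' : ℤ × Bool, A1len (A1mul p p') = A1len p + A1len p' →
        T (A1mul p p') = T p * T p')
    (hquad_s : (T (0, true) + 1) * (T (0, true) - (q : ℂ) • 1) = 0)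
    (hquad_sa : (T (2, true) + 1) * (T (2, true) - (q : ℂ) • 1) = 0)
    (τ : H →ₗ[ℂ] ℂ)
    (hτ : ∀ p : ℤ × Bool, τ (T p) = if p = (0, false) then 1 else 0)
    (θ : Hˣ)
    (hθ : (θ : H) = (((Real.sqrt q)⁻¹ : ℝ) : ℂ) • T (1, false)) :
    (∀ n : ℤ, (¬ ∃ k : ℤ, 0 ≤ k ∧ n = -(2 * k)) → τ ((θ ^ n : Hˣ) : H) = 0)
    ∧ τ ((θ ^ (0 : ℤ) : Hˣ) : H) = 1
    ∧ (∀ k : ℤ, 0 < k →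
        τ ((θ ^ (-(2 * k)) : Hˣ) : H)
          = (((q - 1) * (q ^ k - q ^ (-k)) / (q + 1) : ℝ) : ℂ)) :=
  trace_powers_theta_A1_general q hq H T hT1 hTmul hquad_s τ hτ θ hθ
end

section
/- For the rank-one c-function c(α,t) = (1 − q_{α^∨/2}^{-1/2} q_{α^∨}^{-1} t^{-1})/(1 − q_{α^∨/2}^{-1/2} t^{-1}) (written with t(−α) replaced by the variable t^{-1}), the expansion of 1/(q_{α^∨} c(α,t) c(α,t^{-1})) as a power series Σ_{k≥0} d(α;k) t^k has constant term d(α;0)=1 and for k > 0: d(α;k) = (q_{α^∨} − 1)(q_{α^∨/2} q_{α^∨} − 1)((q_{α^∨/2}^{1/2} q_{α^∨})^k − (q_{α^∨/2}^{1/2} q_{α^∨})^{-k})/(q_{α^∨/2} q_{α^∨}^2 − 1). -/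
/-! Since `∑ aᵏ Xᵏ = (1 - a X)⁻¹`, the claimed series is `1 + A ((1 - x X)⁻¹ - (1 - x⁻¹ X)⁻¹)`
with `x = √q₂ q₁` and `A = (q₁ - 1)(q₂ q₁ - 1)/(q₂ q₁² - 1)`. The denominator is
`-√q₂⁻¹ (1 - x X)(1 - x⁻¹ X)`, and multiplying the series by `(1 - x X)(1 - x⁻¹ X)` leaves the
quadratic `1 - (x + x⁻¹ - A (x - x⁻¹)) X + X²`. The value of `A` is exactly the one making the
middle coefficient `√q₂ + √q₂⁻¹`, so this is the numerator `(X - √q₂⁻¹)(1 - √q₂⁻¹ X)` divided by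
the same constant `-√q₂⁻¹`. -/

namespace PowerSeries

section CommRing

variable {R : Type*} [CommRing R]

theorem mk_pow_mul_one_sub_C_mul_X (a : R) : mk (a ^ ·) * (1 - C a * X) = 1 := by
  simpa [rescale_mk, rescale_X] using congrArg (rescale a) (mk_one_mul_one_sub_eq_one R)

theorem mk_pow_sub_mk_pow_mul (a b : R) :
    (mk (a ^ ·) - mk (b ^ ·)) * ((1 - C a * X) * (1 - C b * X)) = C (a - b) * X := by
  rw [map_sub]
  linear_combination (1 - C b * X) * mk_pow_mul_one_sub_C_mul_X a
    - (1 - C a * X) * mk_pow_mul_one_sub_C_mul_X b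

end CommRing

section Field

variable {K : Type*} [Field K] {x : K}

theorem one_sub_C_mul_X_mul_one_sub_C_inv_mul_X (hx : x ≠ 0) :
    (1 - C x * X) * (1 - C x⁻¹ * X) = 1 - C (x + x⁻¹) * X + X ^ 2 := by
  have hinv : C x * C x⁻¹ = (1 : K⟦X⟧) := by rw [← map_mul, mul_inv_cancel₀ hx, map_one]
  rw [map_add]
  linear_combination X ^ 2 * hinv

theorem X_sub_C_mul_one_sub_C_mul_X (hx : x ≠ 0) :
    (X - C x) * (1 - C x * X) = C (-x) * ((1 - C x⁻¹ * X) * (1 - C x * X)) := by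
  have hinv : C x * C x⁻¹ = (1 : K⟦X⟧) := by rw [← map_mul, mul_inv_cancel₀ hx, map_one]
  rw [map_neg]
  linear_combination (C x * X ^ 2 - X) * hinv

theorem one_add_C_mul_mk_pow_sub_mk_inv_pow_mul (hx : x ≠ 0) (A : K) :
    (1 + C A * (mk (x ^ ·) - mk (x⁻¹ ^ ·))) * ((1 - C x * X) * (1 - C x⁻¹ * X))
      = 1 - C (x + x⁻¹ - A * (x - x⁻¹)) * X + X ^ 2 := by
  rw [add_mul, mul_assoc, mk_pow_sub_mk_pow_mul, one_mul,
    one_sub_C_mul_X_mul_one_sub_C_inv_mul_X hx]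
  simp only [map_sub, map_add, map_mul]
  ring

theorem mk_ite_zpow_sub_zpow_neg_eq (B d : K) :
    mk (fun k : ℕ => if k = 0 then 1 else B * (x ^ (k : ℤ) - x ^ (-(k : ℤ))) / d)
      = 1 + C (B / d) * (mk (x ^ ·) - mk (x⁻¹ ^ ·)) := by
  ext (_ | k) <;> simp [coeff_one, mul_div_right_comm]

end Field

end PowerSeries

open PowerSeries

theorem rank_one_generating_function
    (q₁ q₂ : ℝ) (hq₁ : 1 < q₁) (hq₂ : 1 ≤ q₂) :
    (PowerSeries.mk (fun k : ℕ =>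
        if k = 0 then (1 : ℝ)
        else (q₁ - 1) * (q₂ * q₁ - 1)
            * ((Real.sqrt q₂ * q₁) ^ (k : ℤ) - (Real.sqrt q₂ * q₁) ^ (-(k : ℤ)))
            / (q₂ * q₁ ^ 2 - 1)))
      * (PowerSeries.C (R := ℝ) q₁
          * (PowerSeries.X - PowerSeries.C (R := ℝ) ((Real.sqrt q₂)⁻¹ * q₁⁻¹))
          * (1 - PowerSeries.C (R := ℝ) ((Real.sqrt q₂)⁻¹ * q₁⁻¹) * PowerSeries.X))
    = (PowerSeries.X - PowerSeries.C (R := ℝ) (Real.sqrt q₂)⁻¹)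
      * (1 - PowerSeries.C (R := ℝ) (Real.sqrt q₂)⁻¹ * PowerSeries.X) := by
  set s := Real.sqrt q₂
  have hs : 0 < s := Real.sqrt_pos.mpr (by linarith)
  have hq₂s : q₂ = s ^ 2 := (Real.sq_sqrt (by linarith)).symm
  have hx : s * q₁ ≠ 0 := by positivity
  have hden : s ^ 2 * q₁ ^ 2 - 1 ≠ 0 := by nlinarith
  have hprefactor : q₁ * -(s * q₁)⁻¹ = -s⁻¹ := by field_simp
  have hmiddle : s * q₁ + (s * q₁)⁻¹ - (q₁ - 1) * (q₂ * q₁ - 1) / (q₂ * q₁ ^ 2 - 1)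
      * (s * q₁ - (s * q₁)⁻¹) = s + s⁻¹ := by
    rw [hq₂s]; field_simp; ring
  have hdenominator : C q₁ * (X - C (s⁻¹ * q₁⁻¹)) * (1 - C (s⁻¹ * q₁⁻¹) * X)
      = C (-s⁻¹) * ((1 - C (s * q₁) * X) * (1 - C (s * q₁)⁻¹ * X)) := by
    rw [← mul_inv, mul_assoc, X_sub_C_mul_one_sub_C_mul_X (inv_ne_zero hx), inv_inv,
      ← mul_assoc, ← map_mul, hprefactor]
  have hnumerator : (X - C s⁻¹) * (1 - C s⁻¹ * X) = C (-s⁻¹) * (1 - C (s + s⁻¹) * X + X ^ 2) := by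
    rw [X_sub_C_mul_one_sub_C_mul_X (inv_ne_zero hs.ne'), inv_inv,
      one_sub_C_mul_X_mul_one_sub_C_inv_mul_X hs.ne']
  rw [mk_ite_zpow_sub_zpow_neg_eq, hdenominator, mul_left_comm,
    one_add_C_mul_mk_pow_sub_mk_inv_pow_mul hx, hmiddle, hnumerator]
end

section
/- In the Iwahori-Hecke algebra of a root datum with 2α ∉ R_nr for a fundamental root α, the intertwining element R_s = (1 − θ_{−α}) T_s + (1 − q_{α^∨}) satisfies R_s θ_x = θ_{s(x)} R_s for all x ∈ X, where s = s_α. -/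
/-!
Applying the Bernstein-Lusztig relation to `y = s(x)` (so that `s(y) = x`) expresses `T_s θ_x`
as `θ_y T_s` minus `(q - 1)` times the quotient `(θ_y - θ_x) / (1 - θ_{-α})`. Multiplying on the
left by `1 - θ_{-α}`, which commutes with `θ_y`, clears the denominator, and the correction term
`(1 - q)(θ_y - θ_x)` combines with `(1 - q) θ_x` into `θ_y (1 - q)`.
-/

open Finset

section Bernstein

variable {H X : Type*} [Ring H] [AddCommGroup X] {θ : X → H}

theorem commute_of_map_add (hθmul : ∀ x y, θ (x + y) = θ x * θ y) (x y : X) :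
    Commute (θ x) (θ y) := by
  rw [Commute, SemiconjBy, ← hθmul, ← hθmul, add_comm]

theorem one_sub_mul_sum_range_map_sub_smul (hθmul : ∀ x y, θ (x + y) = θ x * θ y)
    (α z : X) (n : ℕ) :
    (1 - θ (-α)) * ∑ j ∈ range n, θ (z - (j : ℤ) • α) = θ z - θ (z - (n : ℤ) • α) := by
  have hstep : ∀ j : ℕ, (1 - θ (-α)) * θ (z - (j : ℤ) • α)
      = θ (z - (j : ℤ) • α) - θ (z - ((j + 1 : ℕ) : ℤ) • α) := fun j => by
    rw [sub_mul, one_mul, ← hθmul]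
    congr 2
    push_cast
    rw [add_smul, one_smul]
    abel
  rw [mul_sum, sum_congr rfl fun j _ => hstep j, sum_range_sub' (fun j : ℕ => θ (z - (j : ℤ) • α))]
  simp

/-- The Laurent polynomial `(θ_x - θ_{s(x)}) / (1 - θ_{-α})` of the Bernstein-Lusztig relation,
where `s(x) = x - ⟨x, α^∨⟩ α`. -/
def bernsteinQuotient (θ : X → H) (α : X) (αv : X →+ ℤ) (x : X) : H :=
  if 0 ≤ αv x
    then ∑ j ∈ range (αv x).toNat, θ (x - (j : ℤ) • α)
    else - ∑ j ∈ range (-(αv x)).toNat, θ ((x - αv x • α) - (j : ℤ) • α)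

theorem one_sub_mul_bernsteinQuotient (hθmul : ∀ x y, θ (x + y) = θ x * θ y)
    (α : X) (αv : X →+ ℤ) (x : X) :
    (1 - θ (-α)) * bernsteinQuotient θ α αv x = θ x - θ (x - αv x • α) := by
  unfold bernsteinQuotient
  split_ifs with h
  · rw [one_sub_mul_sum_range_map_sub_smul hθmul, Int.toNat_of_nonneg h]
  · rw [mul_neg, one_sub_mul_sum_range_map_sub_smul hθmul, Int.toNat_of_nonneg (by omega),
      neg_smul, sub_neg_eq_add, sub_add_cancel, neg_sub]

end Bernstein

theorem mul_add_smul_one_mul_eq_of_sub_eq_smul {R H : Type*} [CommSemiring R] [Ring H]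
    [Algebra R H] {D t a b p : H} {c : R}
    (hDb : Commute D b) (hDp : D * p = b - a) (hta : t * a - b * t = c • p) :
    (D * t + c • (1 : H)) * a = b * (D * t + c • (1 : H)) := by
  have hta' : t * a = b * t + c • p := eq_add_of_sub_eq' hta
  calc (D * t + c • (1 : H)) * a
      = D * b * t + c • (D * p) + c • a := by
        rw [add_mul, mul_assoc, hta', mul_add, mul_smul_comm, smul_mul_assoc, one_mul, mul_assoc]
    _ = b * (D * t + c • (1 : H)) := by
        rw [hDb.eq, hDp, smul_sub, mul_add, mul_smul_comm, mul_one, mul_assoc]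
        abel

theorem intertwiner_commutation_general
    (H : Type*) [Ring H] [Algebra ℂ H]
    (X : Type*) [AddCommGroup X]
    (θ : X → H) (hθmul : ∀ x y, θ (x + y) = θ x * θ y)
    (α : X) (αv : X →+ ℤ) (hαα : αv α = 2)
    (Ts : H) (qs : ℝ)
    (hBL : ∀ x : X,
      θ x * Ts - Ts * θ (x - αv x • α)
        = ((qs - 1 : ℝ) : ℂ) •
            (if 0 ≤ αv x
              then ∑ j ∈ Finset.range (αv x).toNat, θ (x - (j : ℤ) • α)
              else - ∑ j ∈ Finset.range (-(αv x)).toNat, θ ((x - αv x • α) - (j : ℤ) • α))) :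
    ∀ x : X,
      ((1 - θ (-α)) * Ts + ((1 - qs : ℝ) : ℂ) • 1) * θ x
        = θ (x - αv x • α) * ((1 - θ (-α)) * Ts + ((1 - qs : ℝ) : ℂ) • 1) := by
  intro x
  set y := x - αv x • α
  have hsy : y - αv y • α = x := Module.involutive_preReflection (f := αv.toIntLinearMap) hαα x
  have hBLy : θ y * Ts - Ts * θ x = ((qs - 1 : ℝ) : ℂ) • bernsteinQuotient θ α αv y := by
    rw [← hsy]; exact hBL y
  have hq : ((1 - qs : ℝ) : ℂ) = -((qs - 1 : ℝ) : ℂ) := by push_cast; ring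
  refine mul_add_smul_one_mul_eq_of_sub_eq_smul ((Commute.one_left _).sub_left (commute_of_map_add hθmul _ _))
    (by rw [one_sub_mul_bernsteinQuotient hθmul, hsy]) ?_
  rw [← neg_sub, hBLy, hq, neg_smul]

theorem intertwiner_commutation
    (H : Type*) [Ring H] [Algebra ℂ H]
    (X : Type*) [AddCommGroup X]
    (θ : X → H) (hθ0 : θ 0 = 1) (hθmul : ∀ x y, θ (x + y) = θ x * θ y)
    (α : X) (αv : X →+ ℤ) (hαα : αv α = 2)
    (Ts : H) (qs : ℝ) (hqs : 1 < qs)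
    (hquad : (Ts + 1) * (Ts - (qs : ℂ) • 1) = 0)
    (hBL : ∀ x : X,
      θ x * Ts - Ts * θ (x - αv x • α)
        = ((qs - 1 : ℝ) : ℂ) •
            (if 0 ≤ αv x
              then ∑ j ∈ Finset.range (αv x).toNat, θ (x - (j : ℤ) • α)
              else - ∑ j ∈ Finset.range (-(αv x)).toNat, θ ((x - αv x • α) - (j : ℤ) • α))) :
    ∀ x : X,
      ((1 - θ (-α)) * Ts + ((1 - qs : ℝ) : ℂ) • 1) * θ x
        = θ (x - αv x • α) * ((1 - θ (-α)) * Ts + ((1 - qs : ℝ) : ℂ) • 1) :=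
  intertwiner_commutation_general H X θ hθmul α αv hαα Ts qs hBL
end

section
/- In the Iwahori-Hecke algebra with 2α ∉ R_nr, the intertwining element R_s = (1 − θ_{−α})T_s + (1 − q_{α^∨}) for s = s_α satisfies R_s^2 = (1 − q_{α^∨}θ_{−α})(1 − q_{α^∨}θ_{α}); equivalently, R_s^2 is the element D_s = n_α n_{−α} of A. -/
/- STATEMENT 14: In the Iwahori-Hecke algebra with `2α ∉ R_nr`, the intertwining element
`R_s = (1 − θ_{−α}) T_s + (1 − q)` (for `s = s_α`, `q = q_{α^∨}`) satisfies
`R_s² = (1 − q θ_α)(1 − q θ_{−α})`, an element `D_s` of the commutative subalgebra `A`.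

Setup as in the Bernstein presentation: quadratic relation `(T_s + 1)(T_s − q) = 0` and
the Bernstein-Lusztig commutation relation
`θ_x T_s − T_s θ_{s(x)} = (q − 1)(θ_x − θ_{s(x)})/(1 − θ_{−α})` (the quotient written out
as a Laurent polynomial). -/
theorem intertwiner_square
    (H : Type*) [Ring H] [Algebra ℂ H]
    (X : Type*) [AddCommGroup X]
    (θ : X → H) (hθ0 : θ 0 = 1) (hθmul : ∀ x y, θ (x + y) = θ x * θ y)
    (α : X) (αv : X →+ ℤ) (hαα : αv α = 2)
    (Ts : H) (qs : ℝ) (hqs : 1 < qs)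
    (hquad : (Ts + 1) * (Ts - (qs : ℂ) • 1) = 0)
    (hBL : ∀ x : X,
      θ x * Ts - Ts * θ (x - αv x • α)
        = ((qs - 1 : ℝ) : ℂ) •
            (if 0 ≤ αv x
              then ∑ j ∈ Finset.range (αv x).toNat, θ (x - (j : ℤ) • α)
              else - ∑ j ∈ Finset.range (-(αv x)).toNat, θ ((x - αv x • α) - (j : ℤ) • α))) :
    ((1 - θ (-α)) * Ts + ((1 - qs : ℝ) : ℂ) • 1)
      * ((1 - θ (-α)) * Ts + ((1 - qs : ℝ) : ℂ) • 1)
    = (1 - (qs : ℂ) • θ α) * (1 - (qs : ℂ) • θ (-α)) := by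
  set a := θ (-α) with ha
  set b := θ α with hb
  set d : ℂ := ((qs - 1 : ℝ) : ℂ) with hd
  -- multiplicativity
  have hab : a * b = 1 := by rw [ha, hb, ← hθmul, neg_add_cancel, hθ0]
  have hba : b * a = 1 := by rw [ha, hb, ← hθmul, add_neg_cancel, hθ0]
  -- quadratic relation
  have hTT : Ts * Ts = d • Ts + (qs : ℂ) • 1 := by
    have h := hquad
    have : Ts * Ts - (qs:ℂ) • Ts + Ts - (qs:ℂ) • 1 = 0 := by
      rw [← h]; simp [mul_sub, add_mul, mul_smul_comm]; abel
    have h2 : Ts * Ts = (qs:ℂ) • Ts - Ts + (qs:ℂ) • 1 := by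
      linear_combination (norm := (push_cast; module)) this
    rw [h2, hd]; push_cast; module
  -- Bernstein–Lusztig at x = α
  have hTa : Ts * a = b * Ts - d • (b + 1) := by
    have h := hBL α
    rw [hαα] at h
    simp only [show (0:ℤ) ≤ 2 by norm_num, if_true] at h
    have hs : (α - (2:ℤ) • α) = -α := by
      rw [two_zsmul]; abel
    have hsum : ∑ j ∈ Finset.range (2:ℤ).toNat, θ ((α : X) - (j : ℤ) • α) = b + 1 := by
      rw [show (2:ℤ).toNat = 2 from rfl, Finset.sum_range_succ, Finset.sum_range_succ,
        Finset.sum_range_zero]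
      simp only [Nat.cast_zero, Nat.cast_one, zero_smul, one_smul, sub_zero, zero_add]
      rw [sub_self, hθ0, hb]
    rw [hs, hsum] at h
      -- h : b * Ts - Ts * a = d • (b + 1)
    linear_combination (norm := module) -h
  -- rewrite the scalar (1 - qs) as -d
  have hc : ((1 - qs : ℝ) : ℂ) = -d := by rw [hd]; push_cast; ring
  have hTT' : ∀ y : H, y * Ts * Ts = d • (y * Ts) + (qs : ℂ) • y := by
    intro y
    rw [mul_assoc, hTT, mul_add, mul_smul_comm, mul_smul_comm, mul_one]
  have hTa' : ∀ y : H, y * Ts * a = y * b * Ts - d • (y * b + y) := by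
    intro y
    rw [mul_assoc, hTa, mul_sub, mul_smul_comm, mul_add, mul_one, ← mul_assoc y b Ts]
  rw [hc]
  simp only [add_mul, mul_add, mul_sub, sub_mul, one_mul, mul_one, smul_mul_assoc,
    mul_smul_comm, smul_smul, neg_smul, neg_mul, mul_neg, neg_neg, smul_neg,
    ← mul_assoc, hTa', hTa, hTT', hTT, hab, hba, smul_add, smul_sub]
  rw [hd]; push_cast
  match_scalars <;> ring
end
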